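/- arXiv:2210.01745 — 5 statements merged into one kernel-verified Lean document; each statement's English description precedes it below -/
import Mathlib

section
/- If a predictor p̃ is (L,ε)-performative decision outcome indistinguishable and (L,H,ε)-performative outcome indistinguishable, then p̃ is an (L,H,2ε)-performative omnipredictor. That is, for every loss ℓ in L and every hypothesis h in H, the expected loss of the induced decision rule f̃_ℓ under Nature's outcome distribution is at most the expected loss of h under Nature's outcome distribution plus 2ε. -/
open Finset

/-- Performative risk of decision rule `f` under outcome model `p`, loss `ℓ`,
input distribution `D` (outcome `true` is 1, `false` is 0). -/
def PR {X Yh : Type*} [Fintype X] (D : X → ℝ) (p : X → Yh → ℝ) (f : X → Yh)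
    (ℓ : X → Yh → Bool → ℝ) : ℝ :=
  ∑ x, D x * (p x (f x) * ℓ x (f x) true + (1 - p x (f x)) * ℓ x (f x) false)

/-- Performative decision OI + performative OI imply (L,H,2ε)-performative omniprediction. -/
theorem stmt_0 {X Yh : Type*} [Fintype X] [Fintype Yh] [Nonempty Yh]
    (D : X → ℝ) (hD0 : ∀ x, 0 ≤ D x) (hD1 : ∑ x, D x = 1)
    (pstar ptilde : X → Yh → ℝ)
    (hpstar : ∀ x yh, pstar x yh ∈ Set.Icc (0:ℝ) 1)
    (hptilde : ∀ x yh, ptilde x yh ∈ Set.Icc (0:ℝ) 1)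
    (L : Set (X → Yh → Bool → ℝ)) (H : Set (X → Yh))
    (hLpos : ∀ ℓ ∈ L, ∀ x yh b, 0 ≤ ℓ x yh b)
    (ε : ℝ) (hε : 0 ≤ ε)
    (ftilde : (X → Yh → Bool → ℝ) → X → Yh)
    -- f̃_ℓ is a pointwise argmin of the expected loss under p̃
    (hargmin : ∀ ℓ ∈ L, ∀ x, ∀ yh : Yh,
      ptilde x (ftilde ℓ x) * ℓ x (ftilde ℓ x) true
        + (1 - ptilde x (ftilde ℓ x)) * ℓ x (ftilde ℓ x) false
      ≤ ptilde x yh * ℓ x yh true + (1 - ptilde x yh) * ℓ x yh false)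
    -- (L,ε)-performative decision OI
    (hDOI : ∀ ℓ ∈ L, |PR D pstar (ftilde ℓ) ℓ - PR D ptilde (ftilde ℓ) ℓ| ≤ ε)
    -- (L,H,ε)-performative OI
    (hPOI : ∀ ℓ ∈ L, ∀ h ∈ H, |PR D pstar h ℓ - PR D ptilde h ℓ| ≤ ε) :
    -- (L,H,2ε)-performative omnipredictor
    ∀ ℓ ∈ L, ∀ h ∈ H, PR D pstar (ftilde ℓ) ℓ ≤ PR D pstar h ℓ + 2 * ε := by
  intro ℓ hℓ h hh
  have h1 := abs_le.mp (hDOI ℓ hℓ)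
  have h2 := abs_le.mp (hPOI ℓ hℓ h hh)
  have hmid : PR D ptilde (ftilde ℓ) ℓ ≤ PR D ptilde h ℓ := by
    unfold PR
    apply Finset.sum_le_sum
    intro x _
    exact mul_le_mul_of_nonneg_left (hargmin ℓ hℓ x (h x)) (hD0 x)
  linarith
end

section
/- If a predictor p̃ is (L_W, H, ε)-performative OI and (L_W, ε)-performative decision OI over a base distribution D, where L_W = {ω·ℓ : ℓ∈L, ω∈W} is the class of losses reweighted by importance weight functions, then p̃ is an (L,H,2ε)-performative omnipredictor over every reweighted distribution D_ω with ω∈W. -/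
open Finset

/-- Performative OI and decision OI for the reweighted loss class L_W over the base
distribution D imply (L,H,2ε)-performative omniprediction over every D_ω, ω ∈ W. -/
theorem stmt_6 {X Yh : Type*} [Fintype X] [Fintype Yh] [Nonempty Yh]
    (D : X → ℝ) (hD0 : ∀ x, 0 ≤ D x) (hD1 : ∑ x, D x = 1)
    (W : Set (X → ℝ))
    (hW0 : ∀ ω ∈ W, ∀ x, 0 ≤ ω x)
    (hW1 : ∀ ω ∈ W, ∑ x, ω x * D x = 1)
    (hWpos : ∀ ω ∈ W, ∀ x, D x ≠ 0 → 0 < ω x)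
    (pstar ptilde : X → Yh → ℝ)
    (hpstar : ∀ x yh, pstar x yh ∈ Set.Icc (0:ℝ) 1)
    (hptilde : ∀ x yh, ptilde x yh ∈ Set.Icc (0:ℝ) 1)
    (L : Set (X → Yh → Bool → ℝ)) (H : Set (X → Yh))
    (hLpos : ∀ ℓ ∈ L, ∀ x yh b, 0 ≤ ℓ x yh b)
    (ε : ℝ) (hε : 0 ≤ ε)
    (ftilde : (X → Yh → Bool → ℝ) → X → Yh)
    -- f̃_ℓ is a pointwise argmin of expected loss under p̃ (so f̃_{ω·ℓ} = f̃_ℓ)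
    (hargmin : ∀ ℓ ∈ L, ∀ x, ∀ yh : Yh,
      ptilde x (ftilde ℓ x) * ℓ x (ftilde ℓ x) true
        + (1 - ptilde x (ftilde ℓ x)) * ℓ x (ftilde ℓ x) false
      ≤ ptilde x yh * ℓ x yh true + (1 - ptilde x yh) * ℓ x yh false)
    -- (L_W, H, ε)-performative OI over D
    (hPOI : ∀ ℓ ∈ L, ∀ ω ∈ W, ∀ h ∈ H,
      |PR D pstar h (fun x yh y => ω x * ℓ x yh y)
        - PR D ptilde h (fun x yh y => ω x * ℓ x yh y)| ≤ ε)
    -- (L_W, ε)-performative decision OI over D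
    (hDOI : ∀ ℓ ∈ L, ∀ ω ∈ W,
      |PR D pstar (ftilde ℓ) (fun x yh y => ω x * ℓ x yh y)
        - PR D ptilde (ftilde ℓ) (fun x yh y => ω x * ℓ x yh y)| ≤ ε) :
    ∀ ω ∈ W, ∀ ℓ ∈ L, ∀ h ∈ H,
      PR (fun x => ω x * D x) pstar (ftilde ℓ) ℓ
        ≤ PR (fun x => ω x * D x) pstar h ℓ + 2 * ε := by
  intro ω hω ℓ hℓ h hh
  -- rewrite reweighted PR as PR over D with reweighted loss
  have key : ∀ (p : X → Yh → ℝ) (f : X → Yh),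
      PR (fun x => ω x * D x) p f ℓ = PR D p f (fun x yh y => ω x * ℓ x yh y) := by
    intro p f
    unfold PR
    apply Finset.sum_congr rfl
    intro x _
    ring
  have hmid : PR D ptilde (ftilde ℓ) (fun x yh y => ω x * ℓ x yh y)
      ≤ PR D ptilde h (fun x yh y => ω x * ℓ x yh y) := by
    unfold PR
    apply Finset.sum_le_sum
    intro x _
    have hωD : 0 ≤ ω x * D x := mul_nonneg (hW0 ω hω x) (hD0 x)
    have ha := hargmin ℓ hℓ x (h x)
    simp only
    have := mul_le_mul_of_nonneg_left ha hωD
    nlinarith [this]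
  have h1 := hDOI ℓ hℓ ω hω
  have h2 := hPOI ℓ hℓ ω hω h hh
  rw [key, key]
  have e1 := abs_le.mp h1
  have e2 := abs_le.mp h2
  linarith [e1.1, e1.2, e2.1, e2.2]
end

section
/- Suppose that for all h∈H and ŷ∈Ŷ, |E_{x∼D}[(p*(x,ŷ)−p̃(x,ŷ))·1{h(x)=ŷ}]| ≤ ε/|Ŷ|. Then p̃ is (L_io, H, 2ε)-performative outcome indistinguishable, where L_io is the class of all input-oblivious losses bounded in [0,1]: for every h∈H and every ℓ : Ŷ × {0,1} → [0,1], |E_{x∼D}[p*(x,h(x))·ℓ(h(x),1)+(1−p*(x,h(x)))·ℓ(h(x),0)] − E_{x∼D}[p̃(x,h(x))·ℓ(h(x),1)+(1−p̃(x,h(x)))·ℓ(h(x),0)]| ≤ 2ε. -/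
open Finset

/-- Expected loss of decision rule `h` for an input-oblivious loss `ℓ : Yh → Bool → ℝ`
under outcome model `p`. -/
def ELio {X Yh : Type*} [Fintype X] (D : X → ℝ) (p : X → Yh → ℝ) (h : X → Yh)
    (ℓ : Yh → Bool → ℝ) : ℝ :=
  ∑ x, D x * (p x (h x) * ℓ (h x) true + (1 - p x (h x)) * ℓ (h x) false)

/-- Multiaccuracy (per-decision, with parameter ε/|Yh|) implies (L_io, H, 2ε)-performative OI. -/
theorem stmt_10 {X Yh : Type*} [Fintype X] [Fintype Yh] [Nonempty Yh] [DecidableEq Yh]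
    (D : X → ℝ) (hD0 : ∀ x, 0 ≤ D x) (hD1 : ∑ x, D x = 1)
    (pstar ptilde : X → Yh → ℝ)
    (hpstar : ∀ x yh, pstar x yh ∈ Set.Icc (0:ℝ) 1)
    (hptilde : ∀ x yh, ptilde x yh ∈ Set.Icc (0:ℝ) 1)
    (H : Set (X → Yh)) (ε : ℝ) (hε : 0 ≤ ε)
    -- (H, ε/|Yh|)-multiaccuracy under outcome performativity
    (hMA : ∀ h ∈ H, ∀ yh : Yh,
      |∑ x, D x * ((pstar x yh - ptilde x yh) * (if h x = yh then 1 else 0))|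
        ≤ ε / (Fintype.card Yh : ℝ)) :
    ∀ h ∈ H, ∀ ℓ : Yh → Bool → ℝ, (∀ yh b, ℓ yh b ∈ Set.Icc (0:ℝ) 1) →
      |ELio D pstar h ℓ - ELio D ptilde h ℓ| ≤ 2 * ε := by
  intro h hH ℓ hℓ
  have cardpos : (0:ℝ) < (Fintype.card Yh : ℝ) := by
    exact_mod_cast Fintype.card_pos
  have key : ELio D pstar h ℓ - ELio D ptilde h ℓ
      = ∑ yh, (ℓ yh true - ℓ yh false) *
          ∑ x, D x * ((pstar x yh - ptilde x yh) * (if h x = yh then 1 else 0)) := by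
    calc ELio D pstar h ℓ - ELio D ptilde h ℓ
        = ∑ x, D x * ((pstar x (h x) - ptilde x (h x)) *
            (ℓ (h x) true - ℓ (h x) false)) := by
          unfold ELio
          rw [← Finset.sum_sub_distrib]
          exact Finset.sum_congr rfl fun x _ => by ring
      _ = ∑ x, ∑ yh, (ℓ yh true - ℓ yh false) *
            (D x * ((pstar x yh - ptilde x yh) * (if h x = yh then 1 else 0))) := by
          refine Finset.sum_congr rfl fun x _ => ?_
          rw [Finset.sum_eq_single (h x)]
          · simp; ring
          · intro b _ hb; simp [Ne.symm hb]
          · simp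
      _ = _ := by
          rw [Finset.sum_comm]
          exact Finset.sum_congr rfl fun yh _ => by rw [Finset.mul_sum]
  rw [key]
  calc |∑ yh, (ℓ yh true - ℓ yh false) *
          ∑ x, D x * ((pstar x yh - ptilde x yh) * (if h x = yh then 1 else 0))|
      ≤ ∑ yh, |(ℓ yh true - ℓ yh false) *
          ∑ x, D x * ((pstar x yh - ptilde x yh) * (if h x = yh then 1 else 0))| :=
        Finset.abs_sum_le_sum_abs _ _
    _ ≤ ∑ _yh : Yh, 1 * (ε / (Fintype.card Yh : ℝ)) := by
        refine Finset.sum_le_sum fun yh _ => ?_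
        rw [abs_mul]
        refine mul_le_mul ?_ (hMA h hH yh) (abs_nonneg _) zero_le_one
        have h1 := hℓ yh true
        have h2 := hℓ yh false
        simp only [Set.mem_Icc] at h1 h2
        rw [abs_le]; constructor <;> linarith
    _ = ε := by
        rw [Finset.sum_const, Finset.card_univ, nsmul_eq_mul]
        field_simp
    _ ≤ 2 * ε := by linarith
end

section
/- If p̃ is ε-decision calibrated under outcome performativity with respect to all input-oblivious losses bounded in [0,1], in the per-decision sense that for every such loss ℓ and every ŷ∈Ŷ, |E_{x∼D}[(p*(x,f̃_ℓ(x)) − p̃(x,f̃_ℓ(x)))·1{f̃_ℓ(x)=ŷ}]| ≤ ε/|Ŷ|, then p̃ is (L_io, 2ε)-performative decision OI: for every input-oblivious loss ℓ with values in [0,1], |E_{x∼D}[p*(x,f̃_ℓ(x))ℓ(f̃_ℓ(x),1)+(1−p*(x,f̃_ℓ(x)))ℓ(f̃_ℓ(x),0)] − E_{x∼D}[p̃(x,f̃_ℓ(x))ℓ(f̃_ℓ(x),1)+(1−p̃(x,f̃_ℓ(x)))ℓ(f̃_ℓ(x),0)]| ≤ 2ε. -/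
open Finset

/-- Decision calibration (per-decision, with parameter ε/|Yh|) implies
(L_io, 2ε)-performative decision OI. -/
theorem stmt_11 {X Yh : Type*} [Fintype X] [Fintype Yh] [Nonempty Yh] [DecidableEq Yh]
    (D : X → ℝ) (hD0 : ∀ x, 0 ≤ D x) (hD1 : ∑ x, D x = 1)
    (pstar ptilde : X → Yh → ℝ)
    (hpstar : ∀ x yh, pstar x yh ∈ Set.Icc (0:ℝ) 1)
    (hptilde : ∀ x yh, ptilde x yh ∈ Set.Icc (0:ℝ) 1)
    (ε : ℝ) (hε : 0 ≤ ε)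
    (Ftilde : (Yh → Bool → ℝ) → X → Yh)
    -- F̃ ℓ is a pointwise argmin of expected loss under p̃
    (hargmin : ∀ ℓ : Yh → Bool → ℝ, ∀ x, ∀ yh : Yh,
      ptilde x (Ftilde ℓ x) * ℓ (Ftilde ℓ x) true
        + (1 - ptilde x (Ftilde ℓ x)) * ℓ (Ftilde ℓ x) false
      ≤ ptilde x yh * ℓ yh true + (1 - ptilde x yh) * ℓ yh false)
    -- ε-decision calibration (per decision value)
    (hDC : ∀ ℓ : Yh → Bool → ℝ, (∀ yh b, ℓ yh b ∈ Set.Icc (0:ℝ) 1) → ∀ yh : Yh,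
      |∑ x, D x * ((pstar x (Ftilde ℓ x) - ptilde x (Ftilde ℓ x))
          * (if Ftilde ℓ x = yh then 1 else 0))|
        ≤ ε / (Fintype.card Yh : ℝ)) :
    ∀ ℓ : Yh → Bool → ℝ, (∀ yh b, ℓ yh b ∈ Set.Icc (0:ℝ) 1) →
      |ELio D pstar (Ftilde ℓ) ℓ - ELio D ptilde (Ftilde ℓ) ℓ| ≤ 2 * ε := by
  intro ℓ hℓ
  have key : ELio D pstar (Ftilde ℓ) ℓ - ELio D ptilde (Ftilde ℓ) ℓ
      = ∑ yh : Yh, (ℓ yh true - ℓ yh false) *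
          ∑ x, D x * ((pstar x (Ftilde ℓ x) - ptilde x (Ftilde ℓ x))
            * (if Ftilde ℓ x = yh then 1 else 0)) := by
    unfold ELio
    rw [← Finset.sum_sub_distrib]
    simp only [Finset.mul_sum]
    rw [Finset.sum_comm]
    refine Finset.sum_congr rfl fun x _ => ?_
    rw [Finset.sum_eq_single (Ftilde ℓ x)]
    · simp; ring
    · intro b _ hb; simp [Ne.symm hb]
    · simp
  rw [key]
  calc |∑ yh : Yh, (ℓ yh true - ℓ yh false) *
          ∑ x, D x * ((pstar x (Ftilde ℓ x) - ptilde x (Ftilde ℓ x))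
            * (if Ftilde ℓ x = yh then 1 else 0))|
      ≤ ∑ yh : Yh, |(ℓ yh true - ℓ yh false) *
          ∑ x, D x * ((pstar x (Ftilde ℓ x) - ptilde x (Ftilde ℓ x))
            * (if Ftilde ℓ x = yh then 1 else 0))| := Finset.abs_sum_le_sum_abs _ _
    _ ≤ ∑ yh : Yh, ε / (Fintype.card Yh : ℝ) := by
        refine Finset.sum_le_sum fun yh _ => ?_
        rw [abs_mul]
        have h1 : |ℓ yh true - ℓ yh false| ≤ 1 := by
          have ha := (hℓ yh true).1; have hb := (hℓ yh true).2
          have hc := (hℓ yh false).1; have hd := (hℓ yh false).2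
          rw [abs_le]; constructor <;> linarith
        calc |ℓ yh true - ℓ yh false| * _ ≤ 1 * (ε / (Fintype.card Yh : ℝ)) := by
              apply mul_le_mul h1 (hDC ℓ hℓ yh) (abs_nonneg _) zero_le_one
          _ = ε / (Fintype.card Yh : ℝ) := one_mul _
    _ = ε := by
        rw [Finset.sum_const, Finset.card_univ, nsmul_eq_mul]
        have hc : (0:ℝ) < (Fintype.card Yh : ℝ) := by
          exact_mod_cast Fintype.card_pos
        field_simp
    _ ≤ 2 * ε := by linarith
end

section
/- If p̃ is (H,ε)-multiaccurate and ε-decision calibrated under outcome performativity (both in the appropriate per-decision sense), then p̃ is an (L_io, H, 4ε)-performative omnipredictor: for every input-oblivious loss ℓ : Ŷ × {0,1} → [0,1] and every h ∈ H, the performative risk under Nature of the induced decision rule f̃_ℓ is at most the performative risk under Nature of h plus 4ε. -/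
open Finset

lemma key_transfer {X Yh : Type*} [Fintype X] [Fintype Yh] [Nonempty Yh] [DecidableEq Yh]
    (D : X → ℝ) (pstar ptilde : X → Yh → ℝ) (ℓ : Yh → Bool → ℝ)
    (hℓ : ∀ yh b, ℓ yh b ∈ Set.Icc (0:ℝ) 1) (f : X → Yh) (ε : ℝ)
    (hb : ∀ yh : Yh,
      |∑ x, D x * ((pstar x yh - ptilde x yh) * (if f x = yh then 1 else 0))|
        ≤ ε / (Fintype.card Yh : ℝ)) :
    |ELio D pstar f ℓ - ELio D ptilde f ℓ| ≤ ε := by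
  have hcard : (0:ℝ) < (Fintype.card Yh : ℝ) := by
    exact_mod_cast Fintype.card_pos
  have hdiff : ELio D pstar f ℓ - ELio D ptilde f ℓ
      = ∑ yh : Yh, (ℓ yh true - ℓ yh false) *
          ∑ x, D x * ((pstar x yh - ptilde x yh) * (if f x = yh then 1 else 0)) := by
    unfold ELio
    rw [← Finset.sum_sub_distrib]
    have hx : ∀ x : X,
        D x * (pstar x (f x) * ℓ (f x) true + (1 - pstar x (f x)) * ℓ (f x) false) -
          D x * (ptilde x (f x) * ℓ (f x) true + (1 - ptilde x (f x)) * ℓ (f x) false)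
        = ∑ yh : Yh, (ℓ yh true - ℓ yh false) *
            (D x * ((pstar x yh - ptilde x yh) * (if f x = yh then 1 else 0))) := by
      intro x
      rw [Finset.sum_eq_single (f x)]
      · simp; ring
      · intro yh _ hne; simp [Ne.symm hne]
      · simp
    simp_rw [hx, Finset.mul_sum]
    rw [Finset.sum_comm]
  rw [hdiff]
  calc |∑ yh : Yh, (ℓ yh true - ℓ yh false) *
          ∑ x, D x * ((pstar x yh - ptilde x yh) * (if f x = yh then 1 else 0))|
      ≤ ∑ yh : Yh, |(ℓ yh true - ℓ yh false) *
          ∑ x, D x * ((pstar x yh - ptilde x yh) * (if f x = yh then 1 else 0))| :=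
        Finset.abs_sum_le_sum_abs _ _
    _ ≤ ∑ _yh : Yh, ε / (Fintype.card Yh : ℝ) := by
        apply Finset.sum_le_sum
        intro yh _
        rw [abs_mul]
        have h1 : |ℓ yh true - ℓ yh false| ≤ 1 := by
          have ha := hℓ yh true; have hbb := hℓ yh false
          simp only [Set.mem_Icc] at ha hbb
          rw [abs_le]; constructor <;> linarith
        have h2 := hb yh
        have h3 : (0:ℝ) ≤ |∑ x, D x * ((pstar x yh - ptilde x yh) *
            (if f x = yh then 1 else 0))| := abs_nonneg _
        nlinarith
    _ = ε := by
        rw [Finset.sum_const, Finset.card_univ, nsmul_eq_mul]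
        field_simp

/-- Multiaccuracy plus decision calibration under outcome performativity imply
that `p̃` is an (L_io, H, 4ε)-performative omnipredictor. -/
theorem stmt_19 {X Yh : Type*} [Fintype X] [Fintype Yh] [Nonempty Yh] [DecidableEq Yh]
    (D : X → ℝ) (hD0 : ∀ x, 0 ≤ D x) (hD1 : ∑ x, D x = 1)
    (pstar ptilde : X → Yh → ℝ)
    (hpstar : ∀ x yh, pstar x yh ∈ Set.Icc (0:ℝ) 1)
    (hptilde : ∀ x yh, ptilde x yh ∈ Set.Icc (0:ℝ) 1)
    (H : Set (X → Yh)) (ε : ℝ) (hε : 0 ≤ ε)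
    (Ftilde : (Yh → Bool → ℝ) → X → Yh)
    -- F̃ ℓ is a pointwise argmin of expected loss under p̃
    (hargmin : ∀ ℓ : Yh → Bool → ℝ, ∀ x, ∀ yh : Yh,
      ptilde x (Ftilde ℓ x) * ℓ (Ftilde ℓ x) true
        + (1 - ptilde x (Ftilde ℓ x)) * ℓ (Ftilde ℓ x) false
      ≤ ptilde x yh * ℓ yh true + (1 - ptilde x yh) * ℓ yh false)
    -- (H, ε/|Yh|)-multiaccuracy
    (hMA : ∀ h ∈ H, ∀ yh : Yh,
      |∑ x, D x * ((pstar x yh - ptilde x yh) * (if h x = yh then 1 else 0))|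
        ≤ ε / (Fintype.card Yh : ℝ))
    -- ε-decision calibration
    (hDC : ∀ ℓ : Yh → Bool → ℝ, (∀ yh b, ℓ yh b ∈ Set.Icc (0:ℝ) 1) → ∀ yh : Yh,
      |∑ x, D x * ((pstar x (Ftilde ℓ x) - ptilde x (Ftilde ℓ x))
          * (if Ftilde ℓ x = yh then 1 else 0))|
        ≤ ε / (Fintype.card Yh : ℝ)) :
    ∀ ℓ : Yh → Bool → ℝ, (∀ yh b, ℓ yh b ∈ Set.Icc (0:ℝ) 1) → ∀ h ∈ H,
      ELio D pstar (Ftilde ℓ) ℓ ≤ ELio D pstar h ℓ + 4 * ε := by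
  intro ℓ hℓ h hH
  have hb : ∀ yh : Yh,
      |∑ x, D x * ((pstar x yh - ptilde x yh) * (if Ftilde ℓ x = yh then 1 else 0))|
        ≤ ε / (Fintype.card Yh : ℝ) := by
    intro yh
    have heq : ∑ x, D x * ((pstar x yh - ptilde x yh) * (if Ftilde ℓ x = yh then 1 else 0))
        = ∑ x, D x * ((pstar x (Ftilde ℓ x) - ptilde x (Ftilde ℓ x))
            * (if Ftilde ℓ x = yh then 1 else 0)) := by
      apply Finset.sum_congr rfl
      intro x _
      by_cases hx : Ftilde ℓ x = yh <;> simp [hx]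
    rw [heq]
    exact hDC ℓ hℓ yh
  have hf := key_transfer D pstar ptilde ℓ hℓ (Ftilde ℓ) ε hb
  have hh := key_transfer D pstar ptilde ℓ hℓ h ε (hMA h hH)
  have hmid : ELio D ptilde (Ftilde ℓ) ℓ ≤ ELio D ptilde h ℓ := by
    unfold ELio
    apply Finset.sum_le_sum
    intro x _
    exact mul_le_mul_of_nonneg_left (hargmin ℓ x (h x)) (hD0 x)
  rw [abs_le] at hf hh
  linarith [hf.1, hf.2, hh.1, hh.2]
end
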